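/- Let p ≥ 3 be prime, 0 < x < p, k ≥ 1 and define S_k(x, p^r) = Σ 1/i^k over integers 0 < i < p^r with i ≡ x (mod p). Then for every r ≥ 2, S_k(x, p^r) ≡ 0 (mod p^{r-1}), i.e. S_k(x,p^r)/p^{r-1} is p-integral. -/

import Mathlib

/-!
Writing the residues `i ≡ x (mod p)` below `p^r` as `x + p j` with `j < p^(r-1)`, the claim is
that `∑_{j < p^m} (x + p j)^(-k)` vanishes modulo `p^m`. Modulo `p^(m+1)` the summand only
depends on `j mod p^m`, so the sum over `j < p^(m+1)` is `p` times the sum over `j < p^m` up to a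
multiple of `p^(m+1)`; induction on `m` gains one factor of `p` per step. Clearing the
denominators, which are prime to `p`, transfers the congruence to the numerator of `S`.
-/

/-- `S p k x R = ∑_{0 < i < R, i ≡ x (mod p)} 1/i^k`. -/
def S (p k x R : ℕ) : ℚ :=
  ∑ i ∈ (Finset.Ioo 0 R).filter (fun i => i % p = x % p), (1 : ℚ) / (i : ℚ)^k

open Finset

theorem Finset.sum_range_mul_eq_sum_sum {M : Type*} [AddCommMonoid M] (f : ℕ → M) (a b : ℕ) :
    ∑ i ∈ range (b * a), f i = ∑ t ∈ range b, ∑ j ∈ range a, f (t * a + j) := by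
  induction b with
  | zero => simp
  | succ b ih => rw [Nat.succ_mul, sum_range_add, ih, sum_range_succ]

theorem pow_dvd_sum_range_pow {R : Type*} [CommRing R] (p : ℕ) (f : ℕ → R)
    (hf : ∀ m t i, (p : R) ^ (m + 1) ∣ f (t * p ^ m + i) - f i) (m : ℕ) :
    (p : R) ^ m ∣ ∑ j ∈ range (p ^ m), f j := by
  induction m with
  | zero => simp
  | succ m ih =>
    have hblocks : ∑ j ∈ range (p ^ (m + 1)), f j - p * ∑ i ∈ range (p ^ m), f i
        = ∑ t ∈ range p, ∑ i ∈ range (p ^ m), (f (t * p ^ m + i) - f i) := by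
      simp only [sum_sub_distrib, sum_const, card_range, nsmul_eq_mul, pow_succ',
        sum_range_mul_eq_sum_sum]
    have hsub : (p : R) ^ (m + 1) ∣
        ∑ j ∈ range (p ^ (m + 1)), f j - p * ∑ i ∈ range (p ^ m), f i :=
      hblocks ▸ dvd_sum fun t _ => dvd_sum fun i _ => hf m t i
    have hmul : (p : R) ^ (m + 1) ∣ p * ∑ i ∈ range (p ^ m), f i := by
      rw [pow_succ']; exact mul_dvd_mul_left _ ih
    simpa using dvd_add hsub hmul

theorem ZMod.sub_dvd_inv_sub_inv {n : ℕ} {a b : ZMod n} (ha : IsUnit a) (hb : IsUnit b) :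
    b - a ∣ a⁻¹ - b⁻¹ :=
  ⟨a⁻¹ * b⁻¹, by
    linear_combination b⁻¹ * ZMod.mul_inv_of_unit a ha - a⁻¹ * ZMod.mul_inv_of_unit b hb⟩

theorem Nat.Coprime.pow_add_mul_coprime_pow {p x : ℕ} (hx : x.Coprime p) (j k m : ℕ) :
    ((x + p * j) ^ k).Coprime (p ^ m) :=
  (Nat.Coprime.pow_right m ((Nat.coprime_add_mul_left_left x p j).2 hx)).pow_left k

theorem ZMod.sum_range_inv_add_mul_pow_eq_zero {p x : ℕ} (hx : x.Coprime p) (k m : ℕ) :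
    ∑ j ∈ range (p ^ m), (((x + p * j) ^ k : ℕ) : ZMod (p ^ m))⁻¹ = 0 := by
  have hunit : ∀ j, IsUnit (((x + p * j) ^ k : ℕ) : ZMod (p ^ m)) := fun j =>
    (ZMod.isUnit_iff_coprime _ _).2 (hx.pow_add_mul_coprime_pow j k m)
  suffices (p : ZMod (p ^ m)) ^ m ∣
      ∑ j ∈ range (p ^ m), (((x + p * j) ^ k : ℕ) : ZMod (p ^ m))⁻¹ by
    rwa [← Nat.cast_pow, ZMod.natCast_self, zero_dvd_iff] at this
  refine pow_dvd_sum_range_pow p _ (fun M t i => ?_) m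
  have hstep : ((x + p * (t * p ^ M + i) : ℕ) : ZMod (p ^ m)) - ((x + p * i : ℕ) : ZMod (p ^ m))
      = p ^ (M + 1) * t := by push_cast; ring
  refine (dvd_mul_right _ _).trans <| (hstep ▸ sub_dvd_pow_sub_pow _ _ k).trans ?_
  rw [dvd_sub_comm]
  exact_mod_cast ZMod.sub_dvd_inv_sub_inv (hunit _) (hunit _)

theorem Rat.dvd_num_of_mul_eq {q : ℚ} {n d N : ℤ} (hqd : q * d = N) (hnd : IsCoprime n d)
    (hN : n ∣ N) : n ∣ q.num := by
  have hnum : q.num * d = N * q.den := by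
    have : (q.num : ℚ) * d = N * q.den := by rw [← q.mul_den_eq_num, mul_right_comm, hqd]
    exact_mod_cast this
  exact hnd.dvd_of_dvd_mul_right (hnum ▸ hN.mul_right _)

theorem Rat.dvd_num_sum_one_div {ι : Type*} (s : Finset ι) (a : ι → ℕ) (n : ℕ)
    (ha0 : ∀ i ∈ s, a i ≠ 0) (ha : ∀ i ∈ s, (a i).Coprime n)
    (hsum : ∑ i ∈ s, ((a i : ZMod n))⁻¹ = 0) :
    (n : ℤ) ∣ (∑ i ∈ s, (1 : ℚ) / a i).num := by
  classical
  set N : ℕ := ∑ i ∈ s, ∏ j ∈ s.erase i, a j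
  have hmul : (∑ i ∈ s, (1 : ℚ) / a i) * ((∏ i ∈ s, a i : ℕ) : ℤ) = (N : ℤ) := by
    push_cast [N, sum_mul]
    refine sum_congr rfl fun i hi => ?_
    have : (a i : ℚ) ≠ 0 := by exact_mod_cast ha0 i hi
    rw [← mul_prod_erase s _ hi]
    field_simp
  have hN : (N : ZMod n) = (∏ i ∈ s, a i : ℕ) * ∑ i ∈ s, ((a i : ZMod n))⁻¹ := by
    push_cast [N, mul_sum]
    refine sum_congr rfl fun i hi => ?_
    rw [← mul_prod_erase s _ hi, mul_right_comm, mul_comm,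
      ZMod.mul_inv_of_unit _ ((ZMod.isUnit_iff_coprime _ _).2 (ha i hi)), mul_one]
  refine dvd_num_of_mul_eq hmul ?_ ?_
  · exact Nat.isCoprime_iff_coprime.2 (Nat.Coprime.prod_right fun i hi => (ha i hi).symm)
  · rw [Int.natCast_dvd_natCast, ← ZMod.natCast_eq_zero_iff, hN, hsum, mul_zero]

theorem S_mul_eq_sum_range {p x : ℕ} (hx : 0 < x) (hxp : x < p) (k R : ℕ) :
    S p k x (p * R) = ∑ j ∈ range R, (1 : ℚ) / ((x + p * j : ℕ) : ℚ) ^ k := by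
  have hset : (Ioo 0 (p * R)).filter (fun i => i % p = x % p) = (range R).image (x + p * ·) := by
    ext i
    simp only [mem_filter, mem_Ioo, mem_image, mem_range, Nat.mod_eq_of_lt hxp]
    constructor
    · rintro ⟨⟨-, hiR⟩, hix⟩
      refine ⟨i / p, Nat.div_lt_of_lt_mul hiR, ?_⟩
      rw [← hix]; exact Nat.mod_add_div i p
    · rintro ⟨j, hj, rfl⟩
      refine ⟨⟨by omega, by nlinarith⟩, ?_⟩
      rw [Nat.add_mul_mod_self_left, Nat.mod_eq_of_lt hxp]
  have hp : 0 < p := by omega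
  rw [S, hset, sum_image fun i _ j _ h => Nat.eq_of_mul_eq_mul_left hp (Nat.add_left_cancel h)]

theorem stmt9_general (p x k : ℕ) (hp : p.Prime) (hx : 0 < x) (hxp : x < p)
    (r : ℕ) (hr : 2 ≤ r) :
    (p : ℤ)^(r-1) ∣ (S p k x (p^r)).num := by
  obtain ⟨m, rfl⟩ : ∃ m, r = m + 1 := ⟨r - 1, by omega⟩
  have hcop : x.Coprime p := (hp.coprime_iff_not_dvd.2 (Nat.not_dvd_of_pos_of_lt hx hxp)).symm
  have hS : S p k x (p ^ (m + 1))
      = ∑ j ∈ range (p ^ m), (1 : ℚ) / ((x + p * j) ^ k : ℕ) := by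
    rw [pow_succ', S_mul_eq_sum_range hx hxp]
    simp only [Nat.cast_pow]
  rw [Nat.add_sub_cancel, hS]
  exact_mod_cast Rat.dvd_num_sum_one_div _ _ (p ^ m) (fun j _ => by positivity)
    (fun j _ => hcop.pow_add_mul_coprime_pow j k m)
    (ZMod.sum_range_inv_add_mul_pow_eq_zero hcop k m)

theorem stmt9 (p x k : ℕ) (hp : p.Prime) (hp3 : 3 ≤ p) (hx : 0 < x) (hxp : x < p)
    (hk : 1 ≤ k) (r : ℕ) (hr : 2 ≤ r) :
    (p : ℤ)^(r-1) ∣ (S p k x (p^r)).num :=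
  stmt9_general p x k hp hx hxp r hr
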